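/- If smooth functions h, u : ℝ² → ℝ with h > 0 satisfy the Serre equations, then the tangential momentum conservation law at the free surface holds: ∂_t[u − (1/3) h^{-1}(h³ u_x)_x] + ∂_x[(1/2) u² + g h − (1/2) h² u_x² − (1/3) u h^{-1}(h³ u_x)_x] = 0. -/

import Mathlib

/-- Partial derivative in x. -/
noncomputable def px (f : ℝ → ℝ → ℝ) : ℝ → ℝ → ℝ := fun x t => deriv (fun x' => f x' t) x
/-- Partial derivative in t. -/
noncomputable def pt (f : ℝ → ℝ → ℝ) : ℝ → ℝ → ℝ := fun x t => deriv (fun t' => f x t') t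

/-- Vertical acceleration at the free surface: γ = h(u_x² − u_{xt} − u u_{xx}). -/
noncomputable def gam (h u : ℝ → ℝ → ℝ) : ℝ → ℝ → ℝ :=
  fun x t => h x t * ((px u x t)^2 - px (pt u) x t - u x t * px (px u) x t)

def Sm (f : ℝ → ℝ → ℝ) : Prop := ContDiff ℝ (⊤ : ℕ∞) (fun p : ℝ × ℝ => f p.1 p.2)

lemma Sm.dx {f : ℝ → ℝ → ℝ} (hf : Sm f) (t : ℝ) : Differentiable ℝ (fun x => f x t) := by
  have : (fun x => f x t) = (fun p : ℝ × ℝ => f p.1 p.2) ∘ (fun x => (x, t)) := rfl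
  rw [this]
  exact (hf.differentiable (by simp)).comp (differentiable_id.prodMk (differentiable_const t))

lemma Sm.dt {f : ℝ → ℝ → ℝ} (hf : Sm f) (x : ℝ) : Differentiable ℝ (fun t => f x t) := by
  have : (fun t => f x t) = (fun p : ℝ × ℝ => f p.1 p.2) ∘ (fun t => (x, t)) := rfl
  rw [this]
  exact (hf.differentiable (by simp)).comp ((differentiable_const x).prodMk differentiable_id)

lemma hasDerivAt_slice_x (f : ℝ → ℝ → ℝ) (hf : Sm f) (x t : ℝ) :
    HasDerivAt (fun x' => f x' t) (fderiv ℝ (fun p : ℝ × ℝ => f p.1 p.2) (x, t) (1, 0)) x := by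
  have hF : HasFDerivAt (fun p : ℝ × ℝ => f p.1 p.2)
      (fderiv ℝ (fun p : ℝ × ℝ => f p.1 p.2) (x, t)) (x, t) :=
    (hf.differentiable (by simp)).differentiableAt.hasFDerivAt
  have hc : HasDerivAt (fun x' : ℝ => (x', t)) ((1 : ℝ), (0 : ℝ)) x :=
    (hasDerivAt_id x).prodMk (hasDerivAt_const x t)
  exact hF.comp_hasDerivAt x hc

lemma hasDerivAt_slice_t (f : ℝ → ℝ → ℝ) (hf : Sm f) (x t : ℝ) :
    HasDerivAt (fun t' => f x t') (fderiv ℝ (fun p : ℝ × ℝ => f p.1 p.2) (x, t) (0, 1)) t := by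
  have hF : HasFDerivAt (fun p : ℝ × ℝ => f p.1 p.2)
      (fderiv ℝ (fun p : ℝ × ℝ => f p.1 p.2) (x, t)) (x, t) :=
    (hf.differentiable (by simp)).differentiableAt.hasFDerivAt
  have hc : HasDerivAt (fun t' : ℝ => (x, t')) ((0 : ℝ), (1 : ℝ)) t :=
    (hasDerivAt_const t x).prodMk (hasDerivAt_id t)
  exact hF.comp_hasDerivAt t hc

lemma px_eq_fderiv {f : ℝ → ℝ → ℝ} (hf : Sm f) (x t : ℝ) :
    px f x t = fderiv ℝ (fun p : ℝ × ℝ => f p.1 p.2) (x, t) (1, 0) :=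
  (hasDerivAt_slice_x f hf x t).deriv

lemma pt_eq_fderiv {f : ℝ → ℝ → ℝ} (hf : Sm f) (x t : ℝ) :
    pt f x t = fderiv ℝ (fun p : ℝ × ℝ => f p.1 p.2) (x, t) (0, 1) :=
  (hasDerivAt_slice_t f hf x t).deriv

lemma Sm.fderiv_apply {f : ℝ → ℝ → ℝ} (hf : Sm f) (v : ℝ × ℝ) :
    ContDiff ℝ (⊤ : ℕ∞) (fun p : ℝ × ℝ => fderiv ℝ (fun q : ℝ × ℝ => f q.1 q.2) p v) := by
  exact (hf.fderiv_right (by simp)).clm_apply contDiff_const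

lemma px_sm {f : ℝ → ℝ → ℝ} (hf : Sm f) : Sm (px f) := by
  have : (fun p : ℝ × ℝ => px f p.1 p.2)
      = fun p : ℝ × ℝ => fderiv ℝ (fun q : ℝ × ℝ => f q.1 q.2) p (1, 0) := by
    funext p; exact px_eq_fderiv hf p.1 p.2
  rw [Sm, this]; exact hf.fderiv_apply (1, 0)

lemma pt_sm {f : ℝ → ℝ → ℝ} (hf : Sm f) : Sm (pt f) := by
  have : (fun p : ℝ × ℝ => pt f p.1 p.2)
      = fun p : ℝ × ℝ => fderiv ℝ (fun q : ℝ × ℝ => f q.1 q.2) p (0, 1) := by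
    funext p; exact pt_eq_fderiv hf p.1 p.2
  rw [Sm, this]; exact hf.fderiv_apply (0, 1)

/-- Clairaut: mixed partials commute for smooth functions. -/
lemma px_pt_comm {f : ℝ → ℝ → ℝ} (hf : Sm f) (x t : ℝ) :
    px (pt f) x t = pt (px f) x t := by
  set F := fun p : ℝ × ℝ => f p.1 p.2 with hF
  have hF' : HasFDerivAt (fderiv ℝ F) (fderiv ℝ (fderiv ℝ F) (x, t)) (x, t) :=
    (((hf.fderiv_right (m := (⊤ : ℕ∞)) (by simp)).differentiable (by simp)) (x, t)).hasFDerivAt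
  have hsymm : fderiv ℝ (fderiv ℝ F) (x, t) (1, 0) (0, 1)
      = fderiv ℝ (fderiv ℝ F) (x, t) (0, 1) (1, 0) :=
    hf.contDiffAt.isSymmSndFDerivAt (by rw [minSmoothness_of_isRCLikeNormedField]; exact (WithTop.coe_le_coe.mpr (le_top : (2 : ℕ∞) ≤ ⊤))) _ _
  have h1 : px (pt f) x t = fderiv ℝ (fderiv ℝ F) (x, t) (1, 0) (0, 1) := by
    have hc : HasDerivAt (fun x' : ℝ => (x', t)) ((1 : ℝ), (0 : ℝ)) x :=
      (hasDerivAt_id x).prodMk (hasDerivAt_const x t)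
    have hclm : HasDerivAt (fun x' : ℝ => fderiv ℝ F (x', t))
        (fderiv ℝ (fderiv ℝ F) (x, t) (1, 0)) x := hF'.comp_hasDerivAt x hc
    have happ : HasDerivAt (fun x' : ℝ => fderiv ℝ F (x', t) (0, 1))
        (fderiv ℝ (fderiv ℝ F) (x, t) (1, 0) (0, 1)) x := by
      simpa using hclm.clm_apply (hasDerivAt_const x ((0 : ℝ), (1 : ℝ)))
    have : (fun x' : ℝ => pt f x' t) = fun x' : ℝ => fderiv ℝ F (x', t) (0, 1) := by
      funext x'; exact pt_eq_fderiv hf x' t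
    show deriv (fun x' : ℝ => pt f x' t) x = _
    rw [this]; exact happ.deriv
  have h2 : pt (px f) x t = fderiv ℝ (fderiv ℝ F) (x, t) (0, 1) (1, 0) := by
    have hc : HasDerivAt (fun t' : ℝ => (x, t')) ((0 : ℝ), (1 : ℝ)) t :=
      (hasDerivAt_const t x).prodMk (hasDerivAt_id t)
    have hclm : HasDerivAt (fun t' : ℝ => fderiv ℝ F (x, t'))
        (fderiv ℝ (fderiv ℝ F) (x, t) (0, 1)) t := hF'.comp_hasDerivAt t hc
    have happ : HasDerivAt (fun t' : ℝ => fderiv ℝ F (x, t') (1, 0))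
        (fderiv ℝ (fderiv ℝ F) (x, t) (0, 1) (1, 0)) t := by
      simpa using hclm.clm_apply (hasDerivAt_const t ((1 : ℝ), (0 : ℝ)))
    have : (fun t' : ℝ => px f x t') = fun t' : ℝ => fderiv ℝ F (x, t') (1, 0) := by
      funext t'; exact px_eq_fderiv hf x t'
    show deriv (fun t' : ℝ => px f x t') t = _
    rw [this]; exact happ.deriv
  rw [h1, h2, hsymm]

section Combinators
variable {f g : ℝ → ℝ → ℝ} {x t : ℝ}

lemma Sm.hasDerivX (hf : Sm f) (x t : ℝ) :
    HasDerivAt (fun x' => f x' t) (px f x t) x := ((hf.dx t) x).hasDerivAt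

lemma Sm.hasDerivT (hf : Sm f) (x t : ℝ) :
    HasDerivAt (fun t' => f x t') (pt f x t) t := ((hf.dt x) t).hasDerivAt

lemma px_mul (hf : Sm f) (hg : Sm g) :
    px (fun x t => f x t * g x t) x t = px f x t * g x t + f x t * px g x t :=
  ((hf.hasDerivX x t).mul (hg.hasDerivX x t)).deriv

lemma Sm.add (hf : Sm f) (hg : Sm g) : Sm (fun x t => f x t + g x t) :=
  ContDiff.add hf hg

lemma Sm.sub (hf : Sm f) (hg : Sm g) : Sm (fun x t => f x t - g x t) :=
  ContDiff.sub hf hg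

lemma Sm.mul (hf : Sm f) (hg : Sm g) : Sm (fun x t => f x t * g x t) :=
  ContDiff.mul hf hg

lemma Sm.pow (n : ℕ) (hf : Sm f) : Sm (fun x t => (f x t) ^ n) :=
  ContDiff.pow hf n

lemma Sm.inv (hf : Sm f) (hne : ∀ x t, f x t ≠ 0) : Sm (fun x t => (f x t)⁻¹) :=
  ContDiff.inv hf (fun p => hne p.1 p.2)

lemma px_congr (hfg : ∀ x' t', f x' t' = g x' t') : px f x t = px g x t := by
  have : f = g := by funext x' t'; exact hfg x' t'
  rw [this]

lemma pt_congr (hfg : ∀ x' t', f x' t' = g x' t') : pt f x t = pt g x t := by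
  have : f = g := by funext x' t'; exact hfg x' t'
  rw [this]

end Combinators

/-- Conservation of the tangential momentum at the free surface
    for the Serre--Green--Naghdi equations. -/
theorem serre_tangential_momentum
    (g : ℝ) (hg : 0 < g) (h u : ℝ → ℝ → ℝ)
    (hh : ContDiff ℝ (⊤ : ℕ∞) (fun p : ℝ × ℝ => h p.1 p.2))
    (hu : ContDiff ℝ (⊤ : ℕ∞) (fun p : ℝ × ℝ => u p.1 p.2))
    (hpos : ∀ x t, 0 < h x t)
    (hmass : ∀ x t, pt h x t + px (fun x t => h x t * u x t) x t = 0)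
    (hmom : ∀ x t, pt u x t + u x t * px u x t + g * px h x t
      + (1/3 : ℝ) * (h x t)⁻¹ * px (fun x t => (h x t)^2 * gam h u x t) x t = 0) :
    ∀ x t,
      pt (fun x t => u x t
          - (1/3 : ℝ) * (h x t)⁻¹ * px (fun x t => (h x t)^3 * px u x t) x t) x t
        + px (fun x t => (1/2 : ℝ) * (u x t)^2 + g * h x t
            - (1/2 : ℝ) * (h x t)^2 * (px u x t)^2
            - (1/3 : ℝ) * u x t * (h x t)⁻¹
              * px (fun x t => (h x t)^3 * px u x t) x t) x t = 0 := by
  have Sh : Sm h := hh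
  have Su : Sm u := hu
  have Shx : Sm (px h) := px_sm Sh
  have Sux : Sm (px u) := px_sm Su
  have Sut : Sm (pt u) := pt_sm Su
  have Shxx : Sm (px (px h)) := px_sm Shx
  have Suxx : Sm (px (px u)) := px_sm Sux
  have Suxt : Sm (px (pt u)) := px_sm Sut
  have hne : ∀ x t, h x t ≠ 0 := fun x t => (hpos x t).ne'
  -- expansion of P = (h^3 u_x)_x
  have hPdef : ∀ x t, px (fun x t => (h x t)^3 * px u x t) x t
      = 3 * (h x t)^2 * px h x t * px u x t + (h x t)^3 * px (px u) x t := by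
    intro x t
    have e := (((Sh.hasDerivX x t).pow 3).mul (Sux.hasDerivX x t)).deriv
    exact e.trans (by push_cast [Pi.pow_apply, Pi.mul_apply, Pi.sub_apply, Pi.add_apply]; ring)
  have SP : Sm (px (fun x t => (h x t)^3 * px u x t)) := px_sm ((Sh.pow 3).mul Sux)
  -- mass equation, solved for h_t
  have hmass' : ∀ x t, pt h x t = -(px h x t * u x t) - h x t * px u x t := by
    intro x t
    have e : px (fun x t => h x t * u x t) x t = px h x t * u x t + h x t * px u x t :=
      px_mul Sh Su
    have := hmass x t
    rw [e] at this
    linarith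
  -- x-derivative of the mass equation
  have hmassx : ∀ x t, px (pt h) x t
      = -(px (px h) x t * u x t) - 2 * (px h x t * px u x t) - h x t * px (px u) x t := by
    intro x t
    rw [px_congr hmass']
    have e := ((((Shx.hasDerivX x t).mul (Su.hasDerivX x t)).neg).sub
      ((Sh.hasDerivX x t).mul (Sux.hasDerivX x t))).deriv
    exact e.trans (by ring)
  -- expansion of (h^2 γ)
  have hG : ∀ x t, (h x t)^2 * gam h u x t
      = (h x t)^3 * ((px u x t)^2 - px (pt u) x t - u x t * px (px u) x t) := by
    intro x t; simp only [gam]; ring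
  -- expansion of (h^2 γ)_x
  have hQ : ∀ x t, px (fun x t => (h x t)^2 * gam h u x t) x t
      = 3 * (h x t)^2 * px h x t
          * ((px u x t)^2 - px (pt u) x t - u x t * px (px u) x t)
        + (h x t)^3 * (2 * px u x t * px (px u) x t - px (px (pt u)) x t
            - (px u x t * px (px u) x t + u x t * px (px (px u)) x t)) := by
    intro x t
    rw [px_congr hG]
    have e := (((Sh.hasDerivX x t).pow 3).mul
      ((((Sux.hasDerivX x t).pow 2).sub (Suxt.hasDerivX x t)).sub
        ((Su.hasDerivX x t).mul (Suxx.hasDerivX x t)))).deriv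
    exact e.trans (by push_cast [Pi.pow_apply, Pi.mul_apply, Pi.sub_apply, Pi.add_apply]; ring)
  -- momentum equation solved for u_t
  have hmom' : ∀ x t, pt u x t = -(u x t * px u x t) - g * px h x t
      - (1/3 : ℝ) * (h x t)⁻¹
        * (3 * (h x t)^2 * px h x t
            * ((px u x t)^2 - px (pt u) x t - u x t * px (px u) x t)
          + (h x t)^3 * (2 * px u x t * px (px u) x t - px (px (pt u)) x t
              - (px u x t * px (px u) x t + u x t * px (px (px u)) x t))) := by
    intro x t
    have := hmom x t
    rw [hQ x t] at this
    linarith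
  intro x t
  -- the two swaps of mixed partials we need
  have swap1 : pt (px h) x t = px (pt h) x t := (px_pt_comm hh x t).symm
  have swap2 : pt (px u) x t = px (pt u) x t := (px_pt_comm hu x t).symm
  have swap3 : pt (px (px u)) x t = px (px (pt u)) x t := by
    rw [← px_pt_comm (px_sm hu) x t]
    exact px_congr (fun x' t' => (px_pt_comm hu x' t').symm)
  -- t-derivative of P
  have hPt : pt (px (fun x t => (h x t)^3 * px u x t)) x t
      = 3 * (2 * h x t * pt h x t * px h x t * px u x t
          + (h x t)^2 * pt (px h) x t * px u x t
          + (h x t)^2 * px h x t * pt (px u) x t)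
        + 3 * (h x t)^2 * pt h x t * px (px u) x t
        + (h x t)^3 * pt (px (px u)) x t := by
    rw [pt_congr hPdef]
    have e := (((((((Sh.hasDerivT x t).pow 2).const_mul 3).mul
        (Shx.hasDerivT x t)).mul (Sux.hasDerivT x t))).add
      (((Sh.hasDerivT x t).pow 3).mul (Suxx.hasDerivT x t))).deriv
    refine e.trans ?_
    push_cast [Pi.pow_apply, Pi.mul_apply, Pi.sub_apply, Pi.add_apply]; ring
  -- x-derivative of P
  have hPx : px (px (fun x t => (h x t)^3 * px u x t)) x t
      = 3 * (2 * h x t * px h x t * px h x t * px u x t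
          + (h x t)^2 * px (px h) x t * px u x t
          + (h x t)^2 * px h x t * px (px u) x t)
        + 3 * (h x t)^2 * px h x t * px (px u) x t
        + (h x t)^3 * px (px (px u)) x t := by
    rw [px_congr hPdef]
    have e := (((((((Sh.hasDerivX x t).pow 2).const_mul 3).mul
        (Shx.hasDerivX x t)).mul (Sux.hasDerivX x t))).add
      (((Sh.hasDerivX x t).pow 3).mul (Suxx.hasDerivX x t))).deriv
    refine e.trans ?_
    push_cast [Pi.pow_apply, Pi.mul_apply, Pi.sub_apply, Pi.add_apply]; ring
  -- expand the time derivative in the goal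
  have T1 : pt (fun x t => u x t
      - (1/3 : ℝ) * (h x t)⁻¹ * px (fun x t => (h x t)^3 * px u x t) x t) x t
      = pt u x t - ((1/3 : ℝ) * (-(pt h x t) / (h x t)^2)
            * px (fun x t => (h x t)^3 * px u x t) x t
          + (1/3 : ℝ) * (h x t)⁻¹
            * pt (px (fun x t => (h x t)^3 * px u x t)) x t) :=
    ((Su.hasDerivT x t).sub
      ((((Sh.hasDerivT x t).inv (hne x t)).const_mul (1/3 : ℝ)).mul
        (SP.hasDerivT x t))).deriv
  -- expand the space derivative in the goal
  have T2 : px (fun x t => (1/2 : ℝ) * (u x t)^2 + g * h x t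
      - (1/2 : ℝ) * (h x t)^2 * (px u x t)^2
      - (1/3 : ℝ) * u x t * (h x t)⁻¹
        * px (fun x t => (h x t)^3 * px u x t) x t) x t
      = ((1/2 : ℝ) * ((2 : ℕ) * u x t ^ (2-1) * px u x t) + g * px h x t)
        - ((1/2 : ℝ) * ((2 : ℕ) * h x t ^ (2-1) * px h x t) * (px u x t)^2
            + (1/2 : ℝ) * (h x t)^2 * ((2 : ℕ) * px u x t ^ (2-1) * px (px u) x t))
        - ((((1/3 : ℝ) * px u x t) * (h x t)⁻¹
              + ((1/3 : ℝ) * u x t) * (-(px h x t) / (h x t)^2))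
              * px (fun x t => (h x t)^3 * px u x t) x t
            + ((1/3 : ℝ) * u x t * (h x t)⁻¹)
              * px (px (fun x t => (h x t)^3 * px u x t)) x t) :=
    ((((((Su.hasDerivX x t).pow 2).const_mul (1/2 : ℝ)).add
        ((Sh.hasDerivX x t).const_mul g)).sub
      ((((Sh.hasDerivX x t).pow 2).const_mul (1/2 : ℝ)).mul
        ((Sux.hasDerivX x t).pow 2))).sub
      ((((Su.hasDerivX x t).const_mul (1/3 : ℝ)).mul
        ((Sh.hasDerivX x t).inv (hne x t))).mul (SP.hasDerivX x t))).deriv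
  rw [T1, T2, hPt, hPx, hPdef x t, swap1, swap2, swap3, hmassx x t, hmom' x t, hmass' x t]
  have H0 : h x t ≠ 0 := hne x t
  field_simp
  ring
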